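/- arXiv:1905.08320 — 2 statements merged into one kernel-verified Lean document; each statement's English description precedes it below -/
import Mathlib

section
/- Norm-Sub solves the constrained least squares problem: given (f̃_v)_{v∈D}, let D₁ ⊆ D and δ ∈ ℝ be such that f'_v = f̃_v + δ > 0 for v ∈ D₁, f̃_v + δ ≤ 0 for v ∉ D₁, f'_v = 0 for v ∉ D₁, and Σ_v f'_v = 1. Then (f'_v) minimizes Σ_v (g_v − f̃_v)² over all vectors (g_v) with g_v ≥ 0 for all v and Σ_v g_v = 1. -/
open scoped Classical

/-- Norm-Sub solves the constrained least squares problem. -/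
theorem normsub_solves_cls {D : Type*} [Fintype D] [Nonempty D]
    (ftil : D → ℝ) (δ : ℝ)
    (hne : ∃ v, 0 < ftil v + δ)
    (hsum : ∑ v ∈ Finset.univ.filter (fun v => 0 < ftil v + δ), (ftil v + δ) = 1)
    (f' : D → ℝ) (hf' : ∀ v, f' v = max (ftil v + δ) 0) :
    ∀ g : D → ℝ, (∀ v, 0 ≤ g v) → ∑ v, g v = 1 →
      ∑ v, (f' v - ftil v) ^ 2 ≤ ∑ v, (g v - ftil v) ^ 2 := by
  intro g hg hgsum
  have hf'sum : ∑ v, f' v = 1 := by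
    rw [← Finset.sum_filter_add_sum_filter_not Finset.univ (fun v => 0 < ftil v + δ)]
    have h1 : ∑ v ∈ Finset.univ.filter (fun v => 0 < ftil v + δ), f' v
        = ∑ v ∈ Finset.univ.filter (fun v => 0 < ftil v + δ), (ftil v + δ) := by
      apply Finset.sum_congr rfl
      intro v hv
      simp only [Finset.mem_filter] at hv
      rw [hf' v, max_eq_left hv.2.le]
    have h2 : ∑ v ∈ Finset.univ.filter (fun v => ¬ 0 < ftil v + δ), f' v = 0 := by
      apply Finset.sum_eq_zero
      intro v hv
      simp only [Finset.mem_filter, not_lt] at hv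
      rw [hf' v, max_eq_right hv.2]
    rw [h1, h2, hsum, add_zero]
  have cross : 0 ≤ ∑ v, (g v - f' v) * (f' v - ftil v) := by
    have hterm : ∀ v, δ * (g v - f' v) ≤ (g v - f' v) * (f' v - ftil v) := by
      intro v
      rw [hf' v]
      rcases le_or_gt (ftil v + δ) 0 with h | h
      · rw [max_eq_right h]
        have := hg v
        nlinarith
      · rw [max_eq_left h.le]
        nlinarith
    calc (0:ℝ) = ∑ v, δ * (g v - f' v) := by
          rw [← Finset.mul_sum, Finset.sum_sub_distrib, hgsum, hf'sum]; ring
      _ ≤ _ := Finset.sum_le_sum (fun v _ => hterm v)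
  have key : ∑ v, (g v - ftil v) ^ 2
      = ∑ v, (f' v - ftil v) ^ 2 + ∑ v, (g v - f' v) ^ 2
        + 2 * ∑ v, (g v - f' v) * (f' v - ftil v) := by
    rw [Finset.mul_sum, ← Finset.sum_add_distrib, ← Finset.sum_add_distrib]
    exact Finset.sum_congr rfl (fun v _ => by ring)
  have hsq : 0 ≤ ∑ v, (g v - f' v) ^ 2 :=
    Finset.sum_nonneg (fun v _ => sq_nonneg _)
  linarith
end

section
/- The approximate variance of an FO estimator, σ²(g) = q(1−q)/(n(p−q)²) with p = e^ε/(e^ε+g−1) and q = 1/g, viewed as a function of a real parameter g > 1, is minimized at g = e^ε + 1. -/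
lemma olh_simplify (E n g : ℝ) (hE : 1 < E) (hg : 1 < g) :
    (1 / g) * (1 - 1 / g) / (n * (E / (E + g - 1) - 1 / g) ^ 2)
      = (E + g - 1) ^ 2 / (n * (E - 1) ^ 2 * (g - 1)) := by
  have hg0 : g ≠ 0 := by linarith
  have hEg : E + g - 1 ≠ 0 := by nlinarith
  have hE1 : E - 1 ≠ 0 := by linarith
  have hg1 : g - 1 ≠ 0 := by linarith
  have hdiff : E / (E + g - 1) - 1 / g = (E - 1) * (g - 1) / (g * (E + g - 1)) := by
    field_simp; ring
  rw [hdiff]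
  rcases eq_or_ne n 0 with hn | hn
  · simp [hn]
  · field_simp

/-- The approximate variance σ²(g) = q(1−q)/(n(p−q)²) with p = e^ε/(e^ε+g−1),
    q = 1/g, is minimized over g > 1 at g = e^ε + 1. -/
theorem olh_optimal_g (ε : ℝ) (hε : 0 < ε) (n : ℝ) (hn : 0 < n)
    (σ2 : ℝ → ℝ)
    (hσ : ∀ g, σ2 g =
      (1 / g) * (1 - 1 / g) /
        (n * (Real.exp ε / (Real.exp ε + g - 1) - 1 / g) ^ 2)) :
    ∀ g : ℝ, 1 < g → σ2 (Real.exp ε + 1) ≤ σ2 g := by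
  intro g hg
  set E := Real.exp ε with hEdef
  have hE : 1 < E := by
    rw [hEdef]; have := Real.add_one_le_exp ε; linarith
  have hgE : (1 : ℝ) < E + 1 := by linarith
  rw [hσ, hσ, olh_simplify E n g hE hg, olh_simplify E n (E + 1) hE hgE]
  have hsq : 0 < (E - 1) ^ 2 := pow_pos (by linarith) 2
  have hd1 : 0 < n * (E - 1) ^ 2 * (E + 1 - 1) :=
    mul_pos (mul_pos hn hsq) (by linarith)
  have hd2 : 0 < n * (E - 1) ^ 2 * (g - 1) :=
    mul_pos (mul_pos hn hsq) (by linarith)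
  rw [div_le_div_iff₀ hd1 hd2]
  nlinarith [sq_nonneg (g - 1 - E), sq_nonneg (E - 1), mul_pos hn (mul_pos (pow_pos (by linarith : (0:ℝ) < E-1) 2) (by nlinarith : (0:ℝ) < g - 1))]
end
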